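/- Let μ be a finite measure on a measurable space X, let θ: X → X be a measurable involution preserving μ, and let H: X → ℝ be a bounded measurable function with H ∘ θ = H. Suppose H = H₊ + H₋ with H₋ = H₊ ∘ θ, and suppose there exist measurable maps π₊, π₋ with π₋ = π₊ ∘ θ such that H₊ depends only on π₊ (i.e., H₊ = h ∘ π₊ for some h). Define for bounded measurable f, g on the range of π₊: ⟨g, f⟩_∨ = ∫ conj(g(π₊(θx))) f(π₊(x)) e^{−H(x)} dμ(x). Then conj(⟨g, f⟩_∨) = ⟨f, g⟩_∨, i.e., the form ⟨·,·⟩_∨ is Hermitian. -/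
import Mathlib


open MeasureTheory

/-- Hermiticity of the reflection form, Lemma 4.4: let `μ` be a finite
measure on `X`, `θ` a measurable measure-preserving involution, `proj` measurable with
`π₋ = proj ∘ θ`, and `H x = h (proj x) + h (proj (θ x))` bounded and measurable (so `H ∘ θ = H`
and `H = H₊ + H₋` with `H₋ = H₊ ∘ θ`, `H₊ = h ∘ proj`). Then for bounded measurable
`f g : Y → ℂ` the reflection form
`⟨g, f⟩_∨ = ∫ conj (g (proj (θ x))) * f (proj x) * exp (−H x) dμ(x)` is Hermitian:
`conj ⟨g, f⟩_∨ = ⟨f, g⟩_∨`. -/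
theorem reflection_form_hermitian
    {X Y : Type*} [MeasurableSpace X] [MeasurableSpace Y]
    (μ : Measure X) [IsFiniteMeasure μ]
    (θ : X → X) (hθmeas : Measurable θ) (hθinv : ∀ x, θ (θ x) = x)
    (hθμ : MeasurePreserving θ μ μ)
    (proj : X → Y) (hπ : Measurable proj)
    (h : Y → ℝ) (hmeas : Measurable h)
    (H : X → ℝ) (hH : ∀ x, H x = h (proj x) + h (proj (θ x)))
    (hHbdd : ∃ C, ∀ x, |H x| ≤ C)
    (f g : Y → ℂ) (hf : Measurable f) (hg : Measurable g)
    (hfbdd : ∃ C, ∀ y, ‖f y‖ ≤ C) (hgbdd : ∃ C, ∀ y, ‖g y‖ ≤ C) :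
    (starRingEnd ℂ)
        (∫ x, (starRingEnd ℂ) (g (proj (θ x))) * f (proj x) * Real.exp (-H x) ∂μ) =
      ∫ x, (starRingEnd ℂ) (f (proj (θ x))) * g (proj x) * Real.exp (-H x) ∂μ := by
  let e : X ≃ᵐ X :=
    { toFun := θ, invFun := θ, left_inv := hθinv, right_inv := hθinv,
      measurable_toFun := hθmeas, measurable_invFun := hθmeas }
  rw [← integral_conj]
  have key := hθμ.integral_comp e.measurableEmbedding
    (fun x => (starRingEnd ℂ) (f (proj (θ x))) * g (proj x) * Real.exp (-H x))
  rw [← key]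
  apply integral_congr_ae
  filter_upwards with x
  have hHθ : H (θ x) = H x := by rw [hH, hH, hθinv]; ring
  simp only [map_mul, e, MeasurableEquiv.coe_mk, Equiv.coe_fn_mk, hθinv, hHθ,
    Complex.conj_conj, Complex.conj_ofReal]
  push_cast
  ring
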